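/- Let n ≥ 1 and consider, for real parameters v ∈ ℝⁿ, A, B ∈ ℝ, c > 0, the (n+2)×(n+2) block matrix M(ξ) with entries: top-left 2×2 block (v·ξ) I₂, top-right 2×n block with rows (A/2) ξᵀ and (B/2) ξᵀ, bottom-left n×2 block with columns 2c A ξ and 2c B ξ, bottom-right block (v·ξ) Iₙ. Then the symmetric positive-definite matrix S = diag(I₂, (1/(4c)) Iₙ) symmetrizes M: the product S·M(ξ) is a symmetric matrix for every ξ ∈ ℝⁿ. -/

import Mathlib

open Matrix

/-- The quasilinear system matrix `A(u,ξ)` from Grenier's method. -/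
noncomputable def grenierM (n : ℕ) (v : Fin n → ℝ) (A B c : ℝ) (ξ : Fin n → ℝ) :
    Matrix (Fin 2 ⊕ Fin n) (Fin 2 ⊕ Fin n) ℝ :=
  Matrix.fromBlocks
    ((∑ i, v i * ξ i) • (1 : Matrix (Fin 2) (Fin 2) ℝ))
    (Matrix.of fun i j => (if i = 0 then A else B) / 2 * ξ j)
    (Matrix.of fun i j => 2 * c * (if j = 0 then A else B) * ξ i)
    ((∑ i, v i * ξ i) • (1 : Matrix (Fin n) (Fin n) ℝ))

/-- The symmetrizer `S = diag(I₂, (1/(4c)) Iₙ)`. -/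
noncomputable def grenierS (n : ℕ) (c : ℝ) : Matrix (Fin 2 ⊕ Fin n) (Fin 2 ⊕ Fin n) ℝ :=
  Matrix.fromBlocks 1 0 0 ((1 / (4 * c)) • (1 : Matrix (Fin n) (Fin n) ℝ))

/-- `S = diag(I₂, (1/(4c))Iₙ)` is symmetric positive definite and symmetrizes `M(ξ)`:
`S·M(ξ)` is symmetric for every `ξ`. -/
theorem stmt16 (n : ℕ) (hn : 1 ≤ n) (v : Fin n → ℝ) (A B c : ℝ) (hc : 0 < c) :
    (grenierS n c).PosDef ∧ ∀ ξ : Fin n → ℝ, (grenierS n c * grenierM n v A B c ξ).IsSymm := by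
  constructor
  · refine Matrix.posDef_iff_dotProduct_mulVec.mpr ⟨?_, ?_⟩
    · unfold grenierS
      ext (i|i) (j|j) <;>
        simp [Matrix.IsHermitian, Matrix.one_apply, eq_comm]
    · intro x hx
      have hquad : star x ⬝ᵥ (grenierS n c).mulVec x =
          (∑ i : Fin 2, x (Sum.inl i) ^ 2) + (1 / (4 * c)) * ∑ j : Fin n, x (Sum.inr j) ^ 2 := by
        simp [grenierS, dotProduct, Matrix.mulVec, Fintype.sum_sum_type,
          Matrix.one_apply, Finset.mul_sum, sq, mul_comm, mul_left_comm, mul_assoc]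
      rw [hquad]
      have h1 : 0 ≤ ∑ i : Fin 2, x (Sum.inl i) ^ 2 :=
        Finset.sum_nonneg fun i _ => sq_nonneg _
      have h2 : 0 ≤ ∑ j : Fin n, x (Sum.inr j) ^ 2 :=
        Finset.sum_nonneg fun j _ => sq_nonneg _
      have hcpos : 0 < 1 / (4 * c) := by positivity
      obtain ⟨k, hk⟩ : ∃ k, x k ≠ 0 := Function.ne_iff.mp hx
      rcases k with i | j
      · have hpos : 0 < ∑ i : Fin 2, x (Sum.inl i) ^ 2 :=
          Finset.sum_pos' (fun i _ => sq_nonneg _) ⟨i, Finset.mem_univ i, by positivity⟩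
        have : 0 ≤ (1 / (4 * c)) * ∑ j : Fin n, x (Sum.inr j) ^ 2 := by positivity
        linarith
      · have hpos : 0 < ∑ j : Fin n, x (Sum.inr j) ^ 2 :=
          Finset.sum_pos' (fun j _ => sq_nonneg _) ⟨j, Finset.mem_univ j, by positivity⟩
        nlinarith
  · intro ξ
    unfold grenierS grenierM Matrix.IsSymm
    ext (i|i) (j|j) <;>
      simp [Matrix.mul_apply, Fintype.sum_sum_type,
        Matrix.one_apply, Finset.mul_sum] <;>
      split_ifs with h1 <;> first | rfl | simp_all | (field_simp; ring)
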